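/- arXiv:1708.07333 — 9 statements merged into one kernel-verified Lean document; each statement's English description precedes it below -/
import Mathlib

section
/- Let H₁ and H₂ be Hilbert spaces (over ℝ or ℂ) and let T : H₁ → H₂ be a bounded linear operator. For a unit vector x in H₁, we have x ∈ M_T (i.e., ‖Tx‖ = ‖T‖) if and only if the following two conditions hold: (i) for every y ∈ H₁, ⟨x, y⟩ = 0 implies ⟨Tx, Ty⟩ = 0; and (ii) for every unit vector y ∈ H₁ with ⟨x, y⟩ = 0 one has ‖Ty‖ ≤ ‖Tx‖. -/
open scoped InnerProductSpace

theorem stmt_0 {𝕜 : Type*} [RCLike 𝕜]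
    {H₁ H₂ : Type*} [NormedAddCommGroup H₁] [InnerProductSpace 𝕜 H₁] [CompleteSpace H₁]
    [NormedAddCommGroup H₂] [InnerProductSpace 𝕜 H₂] [CompleteSpace H₂]
    (T : H₁ →L[𝕜] H₂) (x : H₁) (hx : ‖x‖ = 1) :
    ‖T x‖ = ‖T‖ ↔
      ((∀ y : H₁, ⟪x, y⟫_𝕜 = 0 → ⟪T x, T y⟫_𝕜 = 0) ∧
        (∀ y : H₁, ‖y‖ = 1 → ⟪x, y⟫_𝕜 = 0 → ‖T y‖ ≤ ‖T x‖)) := by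
  constructor
  · intro h
    -- real part of ⟪T x, T y⟫ vanishes for all y ⊥ x
    have key : ∀ y : H₁, ⟪x, y⟫_𝕜 = 0 → RCLike.re ⟪T x, T y⟫_𝕜 = 0 := by
      intro y hy
      set r : ℝ := RCLike.re ⟪T x, T y⟫_𝕜 with hr
      have hq : ∀ t : ℝ, 0 ≤ (‖T x‖ ^ 2 * ‖y‖ ^ 2 - ‖T y‖ ^ 2) * (t * t) + (-(2 * r)) * t + 0 := by
        intro t
        have h1 : ‖T (x + (t : 𝕜) • y)‖ ≤ ‖T‖ * ‖x + (t : 𝕜) • y‖ := T.le_opNorm _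
        have h2 : ‖x + (t : 𝕜) • y‖ ^ 2 = 1 + t ^ 2 * ‖y‖ ^ 2 := by
          rw [norm_add_sq (𝕜 := 𝕜), inner_smul_right, hy, hx]
          simp [norm_smul, mul_pow]
        have h3 : ‖T (x + (t : 𝕜) • y)‖ ^ 2 =
            ‖T x‖ ^ 2 + 2 * (t * r) + t ^ 2 * ‖T y‖ ^ 2 := by
          rw [map_add, map_smul, norm_add_sq (𝕜 := 𝕜), inner_smul_right,
            RCLike.re_ofReal_mul]
          simp [norm_smul, mul_pow, hr]
        have h4 : ‖T (x + (t : 𝕜) • y)‖ ^ 2 ≤ ‖T x‖ ^ 2 * (1 + t ^ 2 * ‖y‖ ^ 2) := by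
          have := mul_le_mul h1 h1 (norm_nonneg _) (by positivity)
          calc ‖T (x + (t : 𝕜) • y)‖ ^ 2 ≤ (‖T‖ * ‖x + (t : 𝕜) • y‖) ^ 2 := by
                rw [sq, sq]; exact this
            _ = ‖T x‖ ^ 2 * (1 + t ^ 2 * ‖y‖ ^ 2) := by rw [mul_pow, h2, h]
        nlinarith [h3, h4]
      have hd := discrim_le_zero hq
      have : (-(2 * r)) ^ 2 - 4 * (‖T x‖ ^ 2 * ‖y‖ ^ 2 - ‖T y‖ ^ 2) * 0 ≤ 0 := by
        simpa [discrim] using hd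
      nlinarith [this]
    have hinner : ∀ y : H₁, ⟪x, y⟫_𝕜 = 0 → ⟪T x, T y⟫_𝕜 = 0 := by
      intro y hy
      have h1 := key y hy
      have h2 : RCLike.re ⟪T x, T ((RCLike.I : 𝕜) • y)⟫_𝕜 = 0 := by
        apply key
        rw [inner_smul_right, hy, mul_zero]
      rw [map_smul, inner_smul_right, RCLike.I_mul_re] at h2
      apply RCLike.ext
      · simpa using h1
      · simpa using (neg_eq_zero.mp h2)
    refine ⟨hinner, fun y hy hxy => ?_⟩
    have h0 := hinner y hxy
    have h1 : ‖T (x + y)‖ ≤ ‖T‖ * ‖x + y‖ := T.le_opNorm _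
    have h2 : ‖x + y‖ ^ 2 = 2 := by
      rw [norm_add_sq (𝕜 := 𝕜), hxy, hx, hy]; norm_num
    have h3 : ‖T (x + y)‖ ^ 2 = ‖T x‖ ^ 2 + ‖T y‖ ^ 2 := by
      rw [map_add, norm_add_sq (𝕜 := 𝕜), h0]; simp
    have h4 : ‖T (x + y)‖ ^ 2 ≤ ‖T x‖ ^ 2 * 2 := by
      calc ‖T (x + y)‖ ^ 2 ≤ (‖T‖ * ‖x + y‖) ^ 2 := by
            rw [sq, sq]
            exact mul_le_mul h1 h1 (norm_nonneg _) (by positivity)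
        _ = ‖T x‖ ^ 2 * 2 := by rw [mul_pow, h2, h]
    nlinarith [norm_nonneg (T y), norm_nonneg (T x)]
  · rintro ⟨h1, h2⟩
    refine le_antisymm ?_ ?_
    · simpa [hx] using T.le_opNorm x
    · refine T.opNorm_le_bound (norm_nonneg _) fun z => ?_
      set a : 𝕜 := ⟪x, z⟫_𝕜 with ha
      set y : H₁ := z - a • x with hy
      have hxy : ⟪x, y⟫_𝕜 = 0 := by
        rw [hy, inner_sub_right, inner_smul_right, inner_self_eq_norm_sq_to_K, hx]
        simp [ha]
      have hz : z = a • x + y := by rw [hy]; abel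
      have hTy : ‖T y‖ ≤ ‖T x‖ * ‖y‖ := by
        rcases eq_or_ne y 0 with h | h
        · simp [h]
        · have hny : ‖y‖ ≠ 0 := norm_ne_zero_iff.mpr h
          have hu : ‖(‖y‖⁻¹ : 𝕜) • y‖ = 1 := by
            rw [norm_smul]
            simp [norm_inv, hny]
          have hperp : ⟪x, (‖y‖⁻¹ : 𝕜) • y⟫_𝕜 = 0 := by
            rw [inner_smul_right, hxy, mul_zero]
          have := h2 _ hu hperp
          rw [map_smul, norm_smul] at this
          simp only [norm_inv, RCLike.norm_ofReal, abs_norm] at this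
          rw [inv_mul_le_iff₀ (by positivity)] at this
          linarith [this]
      have hTperp : ⟪T x, T y⟫_𝕜 = 0 := h1 y hxy
      have hnz : ‖z‖ ^ 2 = ‖a‖ ^ 2 + ‖y‖ ^ 2 := by
        rw [hz, norm_add_sq (𝕜 := 𝕜), inner_smul_left, hxy]
        simp [norm_smul, mul_pow, hx]
      have hnTz : ‖T z‖ ^ 2 = ‖a‖ ^ 2 * ‖T x‖ ^ 2 + ‖T y‖ ^ 2 := by
        rw [hz, map_add, map_smul, norm_add_sq (𝕜 := 𝕜), inner_smul_left, hTperp]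
        simp [norm_smul, mul_pow]
      have hsq : ‖T z‖ ^ 2 ≤ (‖T x‖ * ‖z‖) ^ 2 := by
        rw [hnTz, mul_pow, hnz]
        nlinarith [norm_nonneg a, norm_nonneg y, norm_nonneg (T x), norm_nonneg (T y), hTy]
      have h0 : (0:ℝ) ≤ ‖T x‖ * ‖z‖ := by positivity
      nlinarith [norm_nonneg (T z)]
end

section
/- Let H₁ and H₂ be Hilbert spaces (over ℝ or ℂ) and let T : H₁ → H₂ be a nonzero bounded linear operator. If x is a unit vector with ‖Tx‖ = ‖T‖, then T preserves orthogonality at x: for every y ∈ H₁, ⟨x, y⟩ = 0 if and only if ⟨Tx, Ty⟩ = 0. -/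
open scoped InnerProductSpace

theorem stmt_1 {𝕜 : Type*} [RCLike 𝕜]
    {H₁ H₂ : Type*} [NormedAddCommGroup H₁] [InnerProductSpace 𝕜 H₁] [CompleteSpace H₁]
    [NormedAddCommGroup H₂] [InnerProductSpace 𝕜 H₂] [CompleteSpace H₂]
    (T : H₁ →L[𝕜] H₂) (hT : T ≠ 0) (x : H₁) (hx : ‖x‖ = 1) (hxM : ‖T x‖ = ‖T‖) :
    ∀ y : H₁, ⟪x, y⟫_𝕜 = 0 ↔ ⟪T x, T y⟫_𝕜 = 0 := by
  intro y
  have hTnorm : (0 : ℝ) < ‖T‖ := norm_pos_iff.mpr hT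
  set z := ContinuousLinearMap.adjoint T (T x) with hzdef
  have hzx : ⟪z, x⟫_𝕜 = ((‖T‖ ^ 2 : ℝ) : 𝕜) := by
    rw [hzdef, ContinuousLinearMap.adjoint_inner_left, inner_self_eq_norm_sq_to_K, hxM]
    push_cast; ring
  have hzle : ‖z‖ ≤ ‖T‖ ^ 2 := by
    calc ‖z‖ ≤ ‖ContinuousLinearMap.adjoint T‖ * ‖T x‖ :=
          (ContinuousLinearMap.adjoint T).le_opNorm (T x)
      _ = ‖T‖ ^ 2 := by
          rw [LinearIsometryEquiv.norm_map, hxM]; ring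
  have hzge : ‖T‖ ^ 2 ≤ ‖z‖ := by
    have h := norm_inner_le_norm (𝕜 := 𝕜) z x
    rw [hzx, hx, mul_one] at h
    calc ‖T‖ ^ 2 = ‖((‖T‖ ^ 2 : ℝ) : 𝕜)‖ := by
          rw [RCLike.norm_ofReal, abs_of_nonneg (by positivity)]
      _ ≤ ‖z‖ := h
  have hznorm : ‖z‖ = ‖T‖ ^ 2 := le_antisymm hzle hzge
  have hkey : ((‖x‖ : ℝ) : 𝕜) • z = ((‖z‖ : ℝ) : 𝕜) • x := by
    apply inner_eq_norm_mul_iff.mp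
    rw [hzx, hznorm, hx]
    push_cast; ring
  have hz : z = ((‖T‖ ^ 2 : ℝ) : 𝕜) • x := by
    rw [hx, hznorm] at hkey
    simpa using hkey
  have hinner : ⟪T x, T y⟫_𝕜 = ((‖T‖ ^ 2 : ℝ) : 𝕜) * ⟪x, y⟫_𝕜 := by
    rw [← ContinuousLinearMap.adjoint_inner_left, ← hzdef, hz, inner_smul_left,
      RCLike.conj_ofReal]
  rw [hinner]
  constructor
  · intro h; rw [h, mul_zero]
  · intro h
    rcases mul_eq_zero.mp h with h' | h'
    · exfalso
      have : (‖T‖ ^ 2 : ℝ) = 0 := by exact_mod_cast h'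
      nlinarith
    · exact h'
end

section
/- Let X be an n-dimensional Banach space and Y any Banach space (over the same scalar field ℝ or ℂ). Let T : X → Y be a bounded linear operator with ‖T‖ = 1 such that T attains its norm at n linearly independent unit vectors x₁, x₂, …, xₙ (i.e., ‖Txᵢ‖ = 1 for each i) and each Txᵢ is an extreme point of the closed unit ball of Y. Then T is an extreme point of the closed unit ball of the space L(X, Y) of bounded linear operators equipped with the operator norm. -/
/-!
If `T = s • A + t • B` with `‖A‖, ‖B‖ ≤ 1`, then evaluating at `xᵢ` writes the extreme point `T xᵢ`
of the unit ball as a proper convex combination of `A xᵢ` and `B xᵢ`, which lie in the ball; hence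
`A xᵢ = B xᵢ = T xᵢ`. Since the `xᵢ` span `X`, this forces `A = B = T`.
-/

open Metric Set

namespace ContinuousLinearMap

variable {𝕜 E F : Type*} [NontriviallyNormedField 𝕜] [Algebra ℝ 𝕜]
  [NormedAddCommGroup E] [NormedSpace 𝕜 E]
  [NormedAddCommGroup F] [NormedSpace 𝕜 F] [NormedSpace ℝ F] [IsScalarTower ℝ 𝕜 F]

theorem apply_eq_of_mem_openSegment_of_mem_extremePoints {A B T : E →L[𝕜] F}
    (hA : ‖A‖ ≤ 1) (hB : ‖B‖ ≤ 1) (hT : T ∈ openSegment ℝ A B) {v : E} (hv : ‖v‖ ≤ 1)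
    (hext : T v ∈ extremePoints ℝ (closedBall (0 : F) 1)) :
    A v = T v ∧ B v = T v := by
  have mem_ball {S : E →L[𝕜] F} (hS : ‖S‖ ≤ 1) : S v ∈ closedBall (0 : F) 1 :=
    mem_closedBall_zero_iff.2 <| (S.le_opNorm v).trans <| mul_le_one₀ hS (norm_nonneg v) hv
  obtain ⟨s, t, hs, ht, hst, rfl⟩ := hT
  exact (mem_extremePoints.1 hext).2 _ (mem_ball hA) _ (mem_ball hB) ⟨s, t, hs, ht, hst, rfl⟩

theorem mem_extremePoints_closedBall_of_dense_span {T : E →L[𝕜] F} (hT : ‖T‖ ≤ 1)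
    {ι : Type*} {x : ι → E} (hx : Dense (Submodule.span 𝕜 (range x) : Set E))
    (hunit : ∀ i, ‖x i‖ ≤ 1) (hext : ∀ i, T (x i) ∈ extremePoints ℝ (closedBall (0 : F) 1)) :
    T ∈ extremePoints ℝ (closedBall (0 : E →L[𝕜] F) 1) := by
  refine ⟨mem_closedBall_zero_iff.2 hT, fun A hA B hB hT' => ?_⟩
  rw [mem_closedBall_zero_iff] at hA hB
  refine ext_on hx ?_
  rintro _ ⟨i, rfl⟩
  exact (apply_eq_of_mem_openSegment_of_mem_extremePoints hA hB hT' (hunit i) (hext i)).1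

end ContinuousLinearMap

theorem stmt_4_general {𝕜 : Type*} [RCLike 𝕜]
    {X Y : Type*} [NormedAddCommGroup X] [NormedSpace 𝕜 X]
    [NormedAddCommGroup Y] [NormedSpace 𝕜 Y]
    [NormedSpace ℝ Y] [IsScalarTower ℝ 𝕜 Y]
    [FiniteDimensional 𝕜 X] (n : ℕ) (hdim : Module.finrank 𝕜 X = n)
    (T : X →L[𝕜] Y) (hT : ‖T‖ = 1)
    (x : Fin n → X) (hli : LinearIndependent 𝕜 x)
    (hunit : ∀ i, ‖x i‖ = 1)
    (hext : ∀ i, T (x i) ∈ Set.extremePoints ℝ (Metric.closedBall (0 : Y) 1)) :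
    T ∈ Set.extremePoints ℝ (Metric.closedBall (0 : X →L[𝕜] Y) 1) := by
  have hspan : Submodule.span 𝕜 (range x) = ⊤ :=
    hli.span_eq_top_of_card_eq_finrank' (by rw [Fintype.card_fin, hdim])
  refine T.mem_extremePoints_closedBall_of_dense_span hT.le ?_ (fun i => (hunit i).le) hext
  rw [hspan, Submodule.top_coe]
  exact dense_univ

theorem stmt_4 {𝕜 : Type*} [RCLike 𝕜]
    {X Y : Type*} [NormedAddCommGroup X] [NormedSpace 𝕜 X] [CompleteSpace X]
    [NormedAddCommGroup Y] [NormedSpace 𝕜 Y] [CompleteSpace Y]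
    [NormedSpace ℝ Y] [IsScalarTower ℝ 𝕜 Y]
    [FiniteDimensional 𝕜 X] (n : ℕ) (hdim : Module.finrank 𝕜 X = n)
    (T : X →L[𝕜] Y) (hT : ‖T‖ = 1)
    (x : Fin n → X) (hli : LinearIndependent 𝕜 x)
    (hunit : ∀ i, ‖x i‖ = 1) (hattain : ∀ i, ‖T (x i)‖ = 1)
    (hext : ∀ i, T (x i) ∈ Set.extremePoints ℝ (Metric.closedBall (0 : Y) 1)) :
    T ∈ Set.extremePoints ℝ (Metric.closedBall (0 : X →L[𝕜] Y) 1) :=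
  stmt_4_general n hdim T hT x hli hunit hext
end

section
/- Let X be an n-dimensional Banach space and Y a strictly convex Banach space (over the same scalar field ℝ or ℂ). Let T : X → Y be a bounded linear operator with ‖T‖ = 1 such that T attains its norm at n linearly independent unit vectors x₁, x₂, …, xₙ. Then T is an extreme point of the closed unit ball of the space L(X, Y) of bounded linear operators equipped with the operator norm. -/
/-!
If `T` lies in the open segment between `A` and `B` in the unit ball, then each unit vector
`T xᵢ` lies in the open segment between `A xᵢ` and `B xᵢ` in the unit ball of `Y`; since unit
vectors of a strictly convex space are extreme, `A xᵢ = T xᵢ`. The `xᵢ` span `X`, so `A = T`.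
-/

open Metric Set

theorem StrictConvexSpace.mem_extremePoints_closedBall {E : Type*} [NormedAddCommGroup E]
    [NormedSpace ℝ E] [StrictConvexSpace ℝ E] {z : E} {r : ℝ} (hz : ‖z‖ = r) :
    z ∈ extremePoints ℝ (closedBall (0 : E) r) := by
  refine ⟨by simp [hz], fun u hu v hv hzuv => ?_⟩
  obtain rfl : u = v := by
    by_contra huv
    have := openSegment_subset_ball_of_ne hu hv huv hzuv
    simp [hz] at this
  simpa [eq_comm] using hzuv

namespace ContinuousLinearMap

variable {𝕜 X Y : Type*} [RCLike 𝕜] [NormedAddCommGroup X] [NormedSpace 𝕜 X]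
  [NormedAddCommGroup Y] [NormedSpace 𝕜 Y] [NormedSpace ℝ Y] [IsScalarTower ℝ 𝕜 Y]

theorem apply_mem_openSegment {A B T : X →L[𝕜] Y} (hT : T ∈ openSegment ℝ A B) (x : X) :
    T x ∈ openSegment ℝ (A x) (B x) := by
  obtain ⟨a, b, ha, hb, hab, rfl⟩ := hT
  exact ⟨a, b, ha, hb, hab, rfl⟩

variable [StrictConvexSpace ℝ Y]

theorem apply_eq_of_mem_openSegment_of_norm_apply_eq_one {A B T : X →L[𝕜] Y}
    (hA : ‖A‖ ≤ 1) (hB : ‖B‖ ≤ 1) (hT : T ∈ openSegment ℝ A B) {x : X} (hx : ‖x‖ ≤ 1)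
    (hTx : ‖T x‖ = 1) : A x = T x := by
  have hball : ∀ S : X →L[𝕜] Y, ‖S‖ ≤ 1 → S x ∈ closedBall (0 : Y) 1 := fun S hS => by
    simpa using S.le_of_opNorm_le_of_le hS hx
  exact (StrictConvexSpace.mem_extremePoints_closedBall hTx).2 (hball A hA) (hball B hB)
    (apply_mem_openSegment hT x)

theorem mem_extremePoints_closedBall_of_span_eq_top {ι : Type*} {T : X →L[𝕜] Y}
    (hT : ‖T‖ ≤ 1) {x : ι → X} (hspan : Submodule.span 𝕜 (range x) = ⊤)
    (hx : ∀ i, ‖x i‖ ≤ 1) (hTx : ∀ i, ‖T (x i)‖ = 1) :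
    T ∈ extremePoints ℝ (closedBall (0 : X →L[𝕜] Y) 1) := by
  refine ⟨by simpa using hT, fun A hA B hB hTAB => ?_⟩
  rw [mem_closedBall_zero_iff] at hA hB
  exact coe_injective <| LinearMap.ext_on_range hspan fun i =>
    apply_eq_of_mem_openSegment_of_norm_apply_eq_one hA hB hTAB (hx i) (hTx i)

end ContinuousLinearMap

theorem stmt_5_general {𝕜 : Type*} [RCLike 𝕜]
    {X Y : Type*} [NormedAddCommGroup X] [NormedSpace 𝕜 X]
    [NormedAddCommGroup Y] [NormedSpace 𝕜 Y]
    [NormedSpace ℝ Y] [IsScalarTower ℝ 𝕜 Y] [StrictConvexSpace ℝ Y]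
    [FiniteDimensional 𝕜 X] (n : ℕ) (hdim : Module.finrank 𝕜 X = n)
    (T : X →L[𝕜] Y) (hT : ‖T‖ = 1)
    (x : Fin n → X) (hli : LinearIndependent 𝕜 x)
    (hunit : ∀ i, ‖x i‖ = 1) (hattain : ∀ i, ‖T (x i)‖ = 1) :
    T ∈ Set.extremePoints ℝ (Metric.closedBall (0 : X →L[𝕜] Y) 1) :=
  T.mem_extremePoints_closedBall_of_span_eq_top hT.le
    (hli.span_eq_top_of_card_eq_finrank' (by rw [Fintype.card_fin, hdim]))
    (fun i => (hunit i).le) hattain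

theorem stmt_5 {𝕜 : Type*} [RCLike 𝕜]
    {X Y : Type*} [NormedAddCommGroup X] [NormedSpace 𝕜 X] [CompleteSpace X]
    [NormedAddCommGroup Y] [NormedSpace 𝕜 Y] [CompleteSpace Y]
    [NormedSpace ℝ Y] [IsScalarTower ℝ 𝕜 Y] [StrictConvexSpace ℝ Y]
    [FiniteDimensional 𝕜 X] (n : ℕ) (hdim : Module.finrank 𝕜 X = n)
    (T : X →L[𝕜] Y) (hT : ‖T‖ = 1)
    (x : Fin n → X) (hli : LinearIndependent 𝕜 x)
    (hunit : ∀ i, ‖x i‖ = 1) (hattain : ∀ i, ‖T (x i)‖ = 1) :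
    T ∈ Set.extremePoints ℝ (Metric.closedBall (0 : X →L[𝕜] Y) 1) :=
  stmt_5_general n hdim T hT x hli hunit hattain
end

section
/- Let H be a finite-dimensional Hilbert space (over ℝ or ℂ) of dimension n ≥ 1. A bounded linear operator T : H → H is an extreme point of the closed unit ball of L(H) if and only if T is an isometry (i.e., ‖Tx‖ = ‖x‖ for all x ∈ H). -/
/-!
An isometry `T` is extreme because the unit sphere of an inner product space is strictly convex:
if `T = a A + b B` with contractions `A, B`, then each `T x` of norm `‖x‖` is a proper convex
combination of `A x` and `B x` in the ball of radius `‖x‖`, forcing `A x = B x`.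

Conversely, let `T` be a contraction that is not an isometry. A unit vector `v` minimising `‖T v‖`
satisfies `‖T v‖ < 1` and is an eigenvector of `T† T` (Rayleigh quotient), so `T v ⊥ T w` for all
`w ⊥ v`. By a dimension count there is `f ≠ 0` orthogonal to `T (v^⊥)`. For the rank-one operator
`S x = ⟪v, x⟫ f` and small `ε > 0`, Pythagoras on `x = ⟪v, x⟫ v + w` shows that `T ± ε S` are
contractions, so `T` is their midpoint and is not extreme.
-/

open Metric Set Module
open scoped InnerProductSpace

theorem eq_of_norm_ofReal_smul_add_ofReal_smul_eq {𝕜 F : Type*} [RCLike 𝕜] [NormedAddCommGroup F]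
    [InnerProductSpace 𝕜 F] {x y : F} {r a b : ℝ} (hx : ‖x‖ ≤ r) (hy : ‖y‖ ≤ r) (ha : 0 < a)
    (hb : 0 < b) (hab : a + b = 1) (h : ‖(a : 𝕜) • x + (b : 𝕜) • y‖ = r) : x = y := by
  let := InnerProductSpace.rclikeToReal 𝕜 F
  by_contra hne
  exact (norm_combo_lt_of_ne hx hy hne ha hb hab).ne h

theorem LinearMap.exists_ne_zero_forall_inner_apply_eq_zero {𝕜 E F : Type*} [RCLike 𝕜]
    [NormedAddCommGroup E] [InnerProductSpace 𝕜 E] [NormedAddCommGroup F] [InnerProductSpace 𝕜 F]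
    [FiniteDimensional 𝕜 E] [FiniteDimensional 𝕜 F] (hdim : finrank 𝕜 E ≤ finrank 𝕜 F)
    (T : E →ₗ[𝕜] F) {v : E} (hv : v ≠ 0) :
    ∃ f ≠ 0, ∀ w, ⟪v, w⟫_𝕜 = 0 → ⟪f, T w⟫_𝕜 = 0 := by
  have hK : (𝕜 ∙ v)ᗮ.map T ≠ ⊤ := by
    intro htop
    have h1 := Submodule.finrank_add_finrank_orthogonal (𝕜 ∙ v)
    have h2 := Submodule.finrank_map_le T (𝕜 ∙ v)ᗮ
    rw [finrank_span_singleton hv] at h1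
    rw [htop, finrank_top] at h2
    omega
  obtain ⟨f, hf, hf0⟩ := Submodule.exists_mem_ne_zero_of_ne_bot
    (mt Submodule.orthogonal_eq_bot_iff.mp hK)
  exact ⟨f, hf0, fun w hw ↦ (Submodule.mem_orthogonal' _ f).mp hf _
    (Submodule.mem_map_of_mem (Submodule.mem_orthogonal_singleton_iff_inner_right.mpr hw))⟩

namespace ContinuousLinearMap

variable {𝕜 E F : Type*} [RCLike 𝕜] [NormedAddCommGroup E] [InnerProductSpace 𝕜 E]
  [NormedAddCommGroup F] [InnerProductSpace 𝕜 F]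

theorem opNorm_le_one_of_orthogonal {R : E →L[𝕜] F} {v : E} (hv : ‖v‖ = 1) (hRv : ‖R v‖ ≤ 1)
    (horth : ∀ w, ⟪v, w⟫_𝕜 = 0 → ⟪R v, R w⟫_𝕜 = 0) (hR : ∀ w, ⟪v, w⟫_𝕜 = 0 → ‖R w‖ ≤ ‖w‖) :
    ‖R‖ ≤ 1 := by
  refine opNorm_le_bound _ zero_le_one fun x ↦ ?_
  set q := ⟪v, x⟫_𝕜
  set w := x - q • v
  have hw : ⟪v, w⟫_𝕜 = 0 := by
    simp [w, q, inner_sub_right, inner_smul_right, inner_self_eq_norm_sq_to_K, hv]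
  have hx : x = q • v + w := by simp [w]
  have hqw : ⟪q • v, w⟫_𝕜 = 0 := by simp [inner_smul_left, hw]
  have hRqw : ⟪q • R v, R w⟫_𝕜 = 0 := by simp [inner_smul_left, horth w hw]
  have key : ‖R x‖ * ‖R x‖ ≤ ‖x‖ * ‖x‖ := by
    rw [hx, map_add, map_smul, norm_add_sq_eq_norm_sq_add_norm_sq_of_inner_eq_zero _ _ hRqw,
      norm_add_sq_eq_norm_sq_add_norm_sq_of_inner_eq_zero _ _ hqw, norm_smul, norm_smul, hv]
    have hRw := hR w hw
    gcongr
  rw [one_mul]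
  exact mul_self_le_mul_self_iff (norm_nonneg _) (norm_nonneg _) |>.mpr key

theorem inner_apply_eq_zero_of_isMinOn [CompleteSpace E] [CompleteSpace F] (T : E →L[𝕜] F)
    {v : E} (hmin : IsMinOn (‖T ·‖) (sphere 0 ‖v‖) v) {w : E} (hw : ⟪v, w⟫_𝕜 = 0) :
    ⟪T v, T w⟫_𝕜 = 0 := by
  have hsa : IsSelfAdjoint (adjoint T ∘L T) := LinearMap.IsSymmetric.isSelfAdjoint fun x y ↦ by
    simp [adjoint_inner_left, adjoint_inner_right]
  have hmin' : IsMinOn (adjoint T ∘L T).reApplyInnerSelf (sphere 0 ‖v‖) v := by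
    intro x hx
    simp only [reApplyInnerSelf_apply, comp_apply, adjoint_inner_left,
      inner_self_eq_norm_sq]
    exact pow_le_pow_left₀ (norm_nonneg _) (hmin hx) 2
  rw [← adjoint_inner_left, ← comp_apply,
    hsa.eq_smul_self_of_isLocalExtrOn (Or.inl hmin'.localize), inner_smul_left, hw, mul_zero]

variable [NormedSpace ℝ F] [IsScalarTower ℝ 𝕜 F]

theorem notMem_extremePoints_closedBall_of_orthogonal (T : E →L[𝕜] F) (hT : ‖T‖ ≤ 1) {v : E}
    (hv : ‖v‖ = 1) (hTv : ‖T v‖ < 1) (horth : ∀ w, ⟪v, w⟫_𝕜 = 0 → ⟪T v, T w⟫_𝕜 = 0) {f : F}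
    (hf : f ≠ 0) (hf_orth : ∀ w, ⟪v, w⟫_𝕜 = 0 → ⟪f, T w⟫_𝕜 = 0) :
    T ∉ extremePoints ℝ (closedBall 0 1) := by
  set S := (innerSL 𝕜 v).smulRight f
  have hSv : S v = f := by simp [S, inner_self_eq_norm_sq_to_K, hv]
  have hSw : ∀ w, ⟪v, w⟫_𝕜 = 0 → S w = 0 := fun w hw ↦ by simp [S, hw]
  set ε := (1 - ‖T v‖) / ‖f‖
  have hε : 0 < ε := div_pos (sub_pos.2 hTv) (norm_pos_iff.2 hf)
  have hball : ∀ c : ℝ, |c| ≤ ε → T + c • S ∈ closedBall 0 1 := fun c hc ↦ by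
    rw [mem_closedBall_zero_iff]
    have hRw : ∀ w, ⟪v, w⟫_𝕜 = 0 → (T + c • S) w = T w := fun w hw ↦ by simp [hSw w hw]
    have hRv : (T + c • S) v = T v + (c : 𝕜) • f := by
      rw [add_apply, smul_apply, hSv, RCLike.real_smul_eq_coe_smul (K := 𝕜)]
    refine opNorm_le_one_of_orthogonal hv ?_ (fun w hw ↦ ?_) (fun w hw ↦ ?_)
    · calc ‖(T + c • S) v‖ ≤ ‖T v‖ + |c| * ‖f‖ := by
            rw [hRv]; exact (norm_add_le _ _).trans_eq (by rw [norm_smul, RCLike.norm_ofReal])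
        _ ≤ ‖T v‖ + ε * ‖f‖ := by gcongr
        _ = 1 := by rw [div_mul_cancel₀ _ (norm_ne_zero_iff.2 hf)]; ring
    · rw [hRv, hRw w hw, inner_add_left, inner_smul_left, horth w hw, hf_orth w hw, mul_zero,
        add_zero]
    · rw [hRw w hw]
      exact (T.le_of_opNorm_le hT w).trans_eq (one_mul _)
  intro hext
  have hseg : T ∈ openSegment ℝ (T + (-ε) • S) (T + ε • S) :=
    ⟨1 / 2, 1 / 2, by norm_num, by norm_num, by norm_num, by module⟩
  have hεS : ε • S = 0 := by
    simpa using hext.2 (hball (-ε) (by simp [abs_of_pos hε])) (hball ε (abs_of_pos hε).le) hseg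
  have hS : S = 0 := (smul_eq_zero.1 hεS).resolve_left hε.ne'
  exact hf (by rw [← hSv, hS, zero_apply])

theorem mem_extremePoints_closedBall_of_forall_norm_apply_eq {G : Type*} [NormedAddCommGroup G]
    [NormedSpace 𝕜 G] (T : G →L[𝕜] F) (hT : ∀ x, ‖T x‖ = ‖x‖) :
    T ∈ extremePoints ℝ (closedBall 0 1) := by
  refine ⟨mem_closedBall_zero_iff.2 (opNorm_le_bound _ zero_le_one fun x ↦ by rw [hT, one_mul]),
    ?_⟩
  rintro A hA B hB ⟨a, b, ha, hb, hab, rfl⟩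
  rw [mem_closedBall_zero_iff] at hA hB
  suffices A = B by rw [this, Convex.combo_self hab]
  ext x
  refine eq_of_norm_ofReal_smul_add_ofReal_smul_eq (𝕜 := 𝕜) ((A.le_of_opNorm_le hA x).trans_eq
    (one_mul _)) ((B.le_of_opNorm_le hB x).trans_eq (one_mul _)) ha hb hab ?_
  rw [← hT x, add_apply, smul_apply, smul_apply, RCLike.real_smul_eq_coe_smul (K := 𝕜) a,
    RCLike.real_smul_eq_coe_smul (K := 𝕜) b]

theorem forall_norm_apply_eq_of_mem_extremePoints_closedBall [FiniteDimensional 𝕜 E]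
    [FiniteDimensional 𝕜 F] (hdim : finrank 𝕜 E ≤ finrank 𝕜 F) (T : E →L[𝕜] F)
    (hT : T ∈ extremePoints ℝ (closedBall 0 1)) (x : E) : ‖T x‖ = ‖x‖ := by
  have : ProperSpace E := FiniteDimensional.proper_rclike 𝕜 E
  have : CompleteSpace F := FiniteDimensional.complete 𝕜 F
  have hT1 : ‖T‖ ≤ 1 := mem_closedBall_zero_iff.1 hT.1
  have hle : ‖T x‖ ≤ ‖x‖ := (T.le_of_opNorm_le hT1 x).trans_eq (one_mul _)
  by_contra hne
  have hx : x ≠ 0 := by rintro rfl; simp at hne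
  have hu : (‖x‖⁻¹ : 𝕜) • x ∈ sphere (0 : E) 1 :=
    mem_sphere_zero_iff_norm.2 (norm_smul_inv_norm hx)
  obtain ⟨v, hv, hmin⟩ := (isCompact_sphere (0 : E) 1).exists_isMinOn ⟨_, hu⟩
    T.continuous.norm.continuousOn
  rw [mem_sphere_zero_iff_norm] at hv
  have hTv : ‖T v‖ < 1 := calc
    ‖T v‖ ≤ ‖T ((‖x‖⁻¹ : 𝕜) • x)‖ := hmin hu
    _ = ‖x‖⁻¹ * ‖T x‖ := by simp [norm_smul]
    _ < 1 := by rw [inv_mul_lt_one₀ (norm_pos_iff.2 hx)]; exact hle.lt_of_ne hne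
  obtain ⟨f, hf, hf_orth⟩ := (T : E →ₗ[𝕜] F).exists_ne_zero_forall_inner_apply_eq_zero hdim
    (norm_ne_zero_iff.1 (hv.trans_ne one_ne_zero))
  exact notMem_extremePoints_closedBall_of_orthogonal T hT1 hv hTv
    (fun w hw ↦ T.inner_apply_eq_zero_of_isMinOn (hv ▸ hmin) hw) hf hf_orth hT

end ContinuousLinearMap

theorem stmt_6_general {𝕜 : Type*} [RCLike 𝕜]
    {H : Type*} [NormedAddCommGroup H] [InnerProductSpace 𝕜 H]
    [NormedSpace ℝ H] [IsScalarTower ℝ 𝕜 H]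
    [FiniteDimensional 𝕜 H]
    (T : H →L[𝕜] H) :
    T ∈ Set.extremePoints ℝ (Metric.closedBall (0 : H →L[𝕜] H) 1) ↔
      ∀ x : H, ‖T x‖ = ‖x‖ :=
  ⟨ContinuousLinearMap.forall_norm_apply_eq_of_mem_extremePoints_closedBall le_rfl T,
    ContinuousLinearMap.mem_extremePoints_closedBall_of_forall_norm_apply_eq T⟩

theorem stmt_6 {𝕜 : Type*} [RCLike 𝕜]
    {H : Type*} [NormedAddCommGroup H] [InnerProductSpace 𝕜 H]
    [NormedSpace ℝ H] [IsScalarTower ℝ 𝕜 H]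
    [FiniteDimensional 𝕜 H] (n : ℕ) (hn : 1 ≤ n) (hdim : Module.finrank 𝕜 H = n)
    (T : H →L[𝕜] H) :
    T ∈ Set.extremePoints ℝ (Metric.closedBall (0 : H →L[𝕜] H) 1) ↔
      ∀ x : H, ‖T x‖ = ‖x‖ :=
  stmt_6_general T
end

section
/- Let H be a finite-dimensional Hilbert space (over ℝ or ℂ) of dimension n ≥ 1. If a bounded linear operator T : H → H is an extreme point of the closed unit ball of L(H), then T is an isometry, i.e., ‖Tx‖ = ‖x‖ for all x ∈ H. -/
/-! If `‖T x‖ < ‖x‖` for some `x`, the smallest eigenvalue of `T† T` is `< 1`, and for a unit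
eigenvector `e` the vector `T e` is orthogonal to `T (e^⊥)`. Since `T (e^⊥)` has dimension
`< dim H`, its orthogonal complement `K` is nonzero and contains `T e`, so there is `u ∈ K` with
`‖u‖ = 1 - ‖T e‖ > 0`. The operators `T ± ⟪e, ·⟫ u` send `α e + z` (with `z ⊥ e`) to the
orthogonal sums `α (T e ± u) + T z`, so they are contractions; `T` is their midpoint, contradicting
extremality. -/

open RCLike Submodule InnerProductSpace

section

variable {𝕜 E F : Type*} [RCLike 𝕜]

theorem eq_zero_of_mem_extremePoints_of_add_mem_of_sub_mem {R : Type*} [Field R] [LinearOrder R]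
    [IsStrictOrderedRing R] [AddCommGroup E] [Module R E] {A : Set E} {x y : E}
    (hx : x ∈ A.extremePoints R) (hadd : x + y ∈ A) (hsub : x - y ∈ A) :
    y = 0 :=
  add_eq_left.mp (hx.2 hadd hsub (mem_openSegment_add_sub x y))

theorem Submodule.exists_mem_norm_eq [NormedAddCommGroup E] [NormedSpace 𝕜 E]
    {K : Submodule 𝕜 E} (hK : K ≠ ⊥) {r : ℝ} (hr : 0 ≤ r) : ∃ u ∈ K, ‖u‖ = r := by
  obtain ⟨v, hvK, hv⟩ := exists_mem_ne_zero_of_ne_bot hK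
  refine ⟨((r / ‖v‖ : ℝ) : 𝕜) • v, K.smul_mem _ hvK, ?_⟩
  rw [norm_smul, norm_ofReal, abs_of_nonneg (by positivity),
    div_mul_cancel₀ _ (norm_ne_zero_iff.mpr hv)]

variable [NormedAddCommGroup E] [InnerProductSpace 𝕜 E] [NormedAddCommGroup F]
  [InnerProductSpace 𝕜 F]

theorem Submodule.orthogonal_map_ne_bot [FiniteDimensional 𝕜 E] {L : Submodule 𝕜 E}
    (hL : L ≠ ⊤) (T : E →ₗ[𝕜] E) : (L.map T)ᗮ ≠ ⊥ := by
  rw [Ne, orthogonal_eq_bot_iff]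
  intro h
  have := finrank_map_le T L
  rw [h, finrank_top] at this
  exact (finrank_lt hL).not_ge this

theorem Submodule.orthogonal_span_singleton_ne_top {e : E} (he : e ≠ 0) : (𝕜 ∙ e)ᗮ ≠ ⊤ := by
  rwa [Ne, orthogonal_eq_top_iff, span_singleton_eq_bot]

theorem LinearMap.apply_mem_orthogonal_map_orthogonal_singleton [FiniteDimensional 𝕜 E]
    [FiniteDimensional 𝕜 F] (T : E →ₗ[𝕜] F) {μ : 𝕜} {e : E}
    (he : T.adjoint (T e) = μ • e) : T e ∈ ((𝕜 ∙ e)ᗮ.map T)ᗮ := by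
  rintro _ ⟨z, hz, rfl⟩
  rw [SetLike.mem_coe, mem_orthogonal_singleton_iff_inner_left] at hz
  rw [← adjoint_inner_right, he, inner_smul_right, hz, mul_zero]

theorem LinearMap.exists_norm_eq_one_adjoint_apply_eq_smul [FiniteDimensional 𝕜 E]
    [FiniteDimensional 𝕜 F] (T : E →ₗ[𝕜] F) {x : E} (hx : ‖T x‖ < ‖x‖) :
    ∃ e : E, ‖e‖ = 1 ∧ ‖T e‖ < 1 ∧ ∃ μ : 𝕜, T.adjoint (T e) = μ • e := by
  have hx0 : x ≠ 0 := by rintro rfl; simp at hx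
  have : Nontrivial E := nontrivial_of_ne x 0 hx0
  set S : Module.End 𝕜 E := T.adjoint ∘ₗ T
  have hS : S.IsSymmetric := fun u v => by
    rw [comp_apply, comp_apply, adjoint_inner_left, adjoint_inner_right]
  have hquad : ∀ u, re ⟪S u, u⟫_𝕜 = ‖T u‖ ^ 2 := fun u => by
    rw [comp_apply, adjoint_inner_left, inner_self_eq_norm_sq]
  set μ : ℝ := ⨅ u : { u : E // u ≠ 0 }, re ⟪S u, u⟫_𝕜 / ‖(u : E)‖ ^ 2
  have hμx : μ < 1 := by
    refine (ciInf_le ⟨0, ?_⟩ ⟨x, hx0⟩).trans_lt ?_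
    · rintro _ ⟨u, rfl⟩
      dsimp only
      rw [hquad]
      positivity
    · rw [hquad, div_lt_one (by positivity)]
      gcongr
  obtain ⟨e, he, he1⟩ := exists_mem_norm_eq
    (Module.End.hasEigenvalue_iff.mp hS.hasEigenvalue_iInf_of_finiteDimensional) zero_le_one
  replace he : S e = (μ : 𝕜) • e := Module.End.mem_eigenspace_iff.mp he
  refine ⟨e, he1, ?_, μ, he⟩
  have : ‖T e‖ ^ 2 = μ := by
    rw [← hquad, he, inner_smul_left, inner_self_eq_norm_sq_to_K, he1]
    simp
  nlinarith [norm_nonneg (T e)]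

theorem ContinuousLinearMap.norm_add_rankOne_le_one {T : E →L[𝕜] F} (hT : ‖T‖ ≤ 1) {e : E}
    (he : ‖e‖ = 1) {u : F} (hTe : T e ∈ ((𝕜 ∙ e)ᗮ.map (T : E →ₗ[𝕜] F))ᗮ)
    (hu : u ∈ ((𝕜 ∙ e)ᗮ.map (T : E →ₗ[𝕜] F))ᗮ) (h : ‖T e + u‖ ≤ 1) :
    ‖T + rankOne 𝕜 u e‖ ≤ 1 := by
  refine opNorm_le_bound _ zero_le_one fun y => ?_
  obtain ⟨p, hp, z, hz, rfl⟩ := exists_add_mem_mem_orthogonal (K := 𝕜 ∙ e) y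
  obtain ⟨α, rfl⟩ := mem_span_singleton.mp hp
  have hez : ⟪e, z⟫_𝕜 = 0 := mem_orthogonal_singleton_iff_inner_right.mp hz
  have hTz : T z ∈ (𝕜 ∙ e)ᗮ.map (T : E →ₗ[𝕜] F) := mem_map_of_mem hz
  have happ : (T + rankOne 𝕜 u e) (α • e + z) = α • (T e + u) + T z := by
    rw [add_apply, rankOne_apply, inner_add_right, inner_smul_right, hez,
      inner_self_eq_norm_sq_to_K, he]
    simp only [map_add, map_smul]
    module
  have horth : ⟪α • (T e + u), T z⟫_𝕜 = 0 :=
    inner_eq_zero_symm.mp (smul_mem _ α (add_mem hTe hu) _ hTz)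
  have hnorm_p : ‖α • (T e + u)‖ ≤ ‖α • e‖ := by
    rw [norm_smul, norm_smul, he, mul_one]
    exact mul_le_of_le_one_right (norm_nonneg _) h
  have hnorm_z : ‖T z‖ ≤ ‖z‖ := T.le_of_opNorm_le hT z |>.trans_eq (one_mul _)
  have hpz : ⟪α • e, z⟫_𝕜 = 0 := by rw [inner_smul_left, hez, mul_zero]
  rw [one_mul, happ, ← sq_le_sq₀ (norm_nonneg _) (norm_nonneg _), sq, sq,
    norm_add_sq_eq_norm_sq_add_norm_sq_of_inner_eq_zero _ _ horth,
    norm_add_sq_eq_norm_sq_add_norm_sq_of_inner_eq_zero _ _ hpz]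
  gcongr

end

theorem stmt_8_general {𝕜 : Type*} [RCLike 𝕜]
    {H : Type*} [NormedAddCommGroup H] [InnerProductSpace 𝕜 H]
    [NormedSpace ℝ H] [FiniteDimensional 𝕜 H]
    (T : H →L[𝕜] H)
    (hT : T ∈ Set.extremePoints ℝ (Metric.closedBall (0 : H →L[𝕜] H) 1)) :
    ∀ x : H, ‖T x‖ = ‖x‖ := by
  have hT1 : ‖T‖ ≤ 1 := mem_closedBall_zero_iff.mp hT.1
  intro x
  by_contra hne
  have hlt : ‖T x‖ < ‖x‖ := (T.le_of_opNorm_le hT1 x |>.trans_eq (one_mul _)).lt_of_ne hne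
  obtain ⟨e, he1, hTe1, μ, hμ⟩ := (T : H →ₗ[𝕜] H).exists_norm_eq_one_adjoint_apply_eq_smul hlt
  rw [ContinuousLinearMap.coe_coe] at hTe1
  set K := ((𝕜 ∙ e)ᗮ.map (T : H →ₗ[𝕜] H))ᗮ
  have hTeK : T e ∈ K := (T : H →ₗ[𝕜] H).apply_mem_orthogonal_map_orthogonal_singleton hμ
  have hK : K ≠ ⊥ := orthogonal_map_ne_bot
    (orthogonal_span_singleton_ne_top (norm_ne_zero_iff.mp (he1.trans_ne one_ne_zero))) _
  obtain ⟨u, huK, hu⟩ := exists_mem_norm_eq hK (sub_nonneg.mpr hTe1.le)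
  have hle : ∀ v : H, ‖v‖ = ‖u‖ → ‖T e + v‖ ≤ 1 := fun v hv =>
    (norm_add_le _ _).trans (by rw [hv, hu, add_sub_cancel])
  have hD : rankOne 𝕜 u e = 0 := by
    refine eq_zero_of_mem_extremePoints_of_add_mem_of_sub_mem hT ?_ ?_
    · exact mem_closedBall_zero_iff.mpr (T.norm_add_rankOne_le_one hT1 he1 hTeK huK (hle u rfl))
    · rw [sub_eq_add_neg, ← neg_apply, ← map_neg]
      exact mem_closedBall_zero_iff.mpr
        (T.norm_add_rankOne_le_one hT1 he1 hTeK (neg_mem huK) (hle (-u) (norm_neg u)))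
  rw [← norm_eq_zero, norm_rankOne, he1, mul_one, hu, sub_eq_zero] at hD
  exact hTe1.ne' hD

theorem stmt_8 {𝕜 : Type*} [RCLike 𝕜]
    {H : Type*} [NormedAddCommGroup H] [InnerProductSpace 𝕜 H]
    [NormedSpace ℝ H] [IsScalarTower ℝ 𝕜 H]
    [FiniteDimensional 𝕜 H] (n : ℕ) (hn : 1 ≤ n) (hdim : Module.finrank 𝕜 H = n)
    (T : H →L[𝕜] H)
    (hT : T ∈ Set.extremePoints ℝ (Metric.closedBall (0 : H →L[𝕜] H) 1)) :
    ∀ x : H, ‖T x‖ = ‖x‖ :=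
  stmt_8_general T hT
end

section
/- Let X be a two-dimensional real Banach space which is not strictly convex (i.e., there exist unit vectors u ≠ v with ‖u + v‖ = 2, equivalently the unit sphere contains a nondegenerate line segment). Then there exists a bounded linear operator T : X → X which is an extreme point of the closed unit ball of L(X) but is not an isometry. -/
/-!
A norm-one functional `g` with `g u = g v = 1` exposes the segment `[u, v]` of the unit sphere.
For an extreme point `y` of the unit ball, the rank-one operator `T = g ⊗ y` is extreme: if `T`
lies in the open segment between contractions `A` and `B`, then for every `x` of norm at most one
with `g x = 1`, `y = T x` lies in the open segment between `A x` and `B x` in the unit ball, so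
`A x = B x = y`. In dimension two `u` and `v` span the space, hence `A = B = T`.
But `T (u - v) = 0`.
-/

open Set Metric

section RankOne

variable {X Y : Type*} [NormedAddCommGroup X] [NormedSpace ℝ X]
  [NormedAddCommGroup Y] [NormedSpace ℝ Y]

theorem exists_norm_eq_one_apply_eq_one_of_norm_add_eq_two {u v : X} (hu : ‖u‖ = 1)
    (hv : ‖v‖ = 1) (huv : ‖u + v‖ = 2) : ∃ g : X →L[ℝ] ℝ, ‖g‖ = 1 ∧ g u = 1 ∧ g v = 1 := by
  have hne : u + v ≠ 0 := by
    rw [← norm_ne_zero_iff, huv]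
    norm_num
  obtain ⟨g, hg, hguv⟩ := exists_dual_vector ℝ (u + v) (norm_ne_zero_iff.mpr hne)
  have hgu : g u ≤ 1 := (Real.le_norm_self _).trans (by simpa [hg, hu] using g.le_opNorm u)
  have hgv : g v ≤ 1 := (Real.le_norm_self _).trans (by simpa [hg, hv] using g.le_opNorm v)
  rw [map_add, huv] at hguv
  exact ⟨g, hg, by norm_num at hguv; linarith, by norm_num at hguv; linarith⟩

theorem linearIndependent_pair_of_apply_eq_one {u v : X} (huv : u ≠ v) (g : X →L[ℝ] ℝ)
    (hu : g u = 1) (hv : g v = 1) : LinearIndependent ℝ ![u, v] := by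
  have hu0 : u ≠ 0 := by
    rintro rfl
    simp at hu
  refine (LinearIndependent.pair_iff' hu0).mpr fun a ha => huv ?_
  have ha1 : a = 1 := by simpa [hu, hv] using congrArg g ha
  rwa [ha1, one_smul] at ha

theorem smulRight_mem_extremePoints_closedBall {g : X →L[ℝ] ℝ} (hg : ‖g‖ ≤ 1) {y : Y}
    (hy : y ∈ extremePoints ℝ (closedBall 0 1))
    (hspan : Submodule.span ℝ {x | ‖x‖ ≤ 1 ∧ g x = 1} = ⊤) :
    g.smulRight y ∈ extremePoints ℝ (closedBall (0 : X →L[ℝ] Y) 1) := by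
  rw [mem_extremePoints] at hy ⊢
  have hy1 : ‖y‖ ≤ 1 := by simpa using hy.1
  refine ⟨?_, fun A hA B hB hT => ?_⟩
  · rw [mem_closedBall_zero_iff, ContinuousLinearMap.norm_smulRight_apply]
    exact mul_le_one₀ hg (norm_nonneg y) hy1
  have apply_mem {C : X →L[ℝ] Y} (hC : C ∈ closedBall 0 1) {x : X} (hx : ‖x‖ ≤ 1) :
      C x ∈ closedBall 0 1 := by
    rw [mem_closedBall_zero_iff] at hC ⊢
    simpa using C.le_of_opNorm_le_of_le hC hx
  have agree (x : X) (hx : x ∈ {x | ‖x‖ ≤ 1 ∧ g x = 1}) : A x = y ∧ B x = y := by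
    obtain ⟨a, b, ha, hb, hab, hT⟩ := hT
    refine hy.2 _ (apply_mem hA hx.1) _ (apply_mem hB hx.1) ⟨a, b, ha, hb, hab, ?_⟩
    simpa [hx.2] using congrArg (fun S : X →L[ℝ] Y => S x) hT
  have eq_of_agree {C : X →L[ℝ] Y} (hC : ∀ x ∈ {x | ‖x‖ ≤ 1 ∧ g x = 1}, C x = y) :
      C = g.smulRight y :=
    ContinuousLinearMap.coe_injective <|
      LinearMap.ext_on hspan fun x hx => by simp [hC x hx, hx.2]
  exact ⟨eq_of_agree fun x hx => (agree x hx).1, eq_of_agree fun x hx => (agree x hx).2⟩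

end RankOne

theorem stmt_9_general {X : Type*} [NormedAddCommGroup X] [NormedSpace ℝ X]
    (hdim : Module.finrank ℝ X = 2)
    (hnsc : ∃ u v : X, ‖u‖ = 1 ∧ ‖v‖ = 1 ∧ u ≠ v ∧ ‖u + v‖ = 2) :
    ∃ T : X →L[ℝ] X,
      T ∈ Set.extremePoints ℝ (Metric.closedBall (0 : X →L[ℝ] X) 1) ∧
      ¬ (∀ x : X, ‖T x‖ = ‖x‖) := by
  obtain ⟨u, v, hu, hv, huv, hsum⟩ := hnsc
  have : FiniteDimensional ℝ X := .of_finrank_pos (by omega)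
  obtain ⟨g, hg, hgu, hgv⟩ := exists_norm_eq_one_apply_eq_one_of_norm_add_eq_two hu hv hsum
  have hli := linearIndependent_pair_of_apply_eq_one huv g hgu hgv
  have hspan : Submodule.span ℝ {x | ‖x‖ ≤ 1 ∧ g x = 1} = ⊤ := by
    refine eq_top_mono (Submodule.span_mono ?_)
      (hli.span_eq_top_of_card_eq_finrank (by simp [hdim]))
    simp [insert_subset_iff, hu, hv, hgu, hgv]
  obtain ⟨y, hy⟩ := (isCompact_closedBall (0 : X) 1).extremePoints_nonempty ⟨0, by simp⟩
  refine ⟨g.smulRight y, smulRight_mem_extremePoints_closedBall hg.le hy hspan, fun hiso => ?_⟩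
  have hker : g.smulRight y (u - v) = 0 := by simp [hgu, hgv]
  have : ‖u - v‖ = 0 := by rw [← hiso, hker, norm_zero]
  exact huv (sub_eq_zero.mp (norm_eq_zero.mp this))

theorem stmt_9 {X : Type*} [NormedAddCommGroup X] [NormedSpace ℝ X] [CompleteSpace X]
    (hdim : Module.finrank ℝ X = 2)
    (hnsc : ∃ u v : X, ‖u‖ = 1 ∧ ‖v‖ = 1 ∧ u ≠ v ∧ ‖u + v‖ = 2) :
    ∃ T : X →L[ℝ] X,
      T ∈ Set.extremePoints ℝ (Metric.closedBall (0 : X →L[ℝ] X) 1) ∧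
      ¬ (∀ x : X, ‖T x‖ = ‖x‖) :=
  stmt_9_general hdim hnsc
end

section
/- Let H₁ and H₂ be Hilbert spaces (over ℝ or ℂ) and let T : H₁ → H₂ be a bounded linear operator. If two unit vectors x and y both belong to M_T (i.e., ‖Tx‖ = ‖Ty‖ = ‖T‖), then every unit vector in the linear span of {x, y} also belongs to M_T. -/
open RCLike ContinuousLinearMap

local notation "⟪" x ", " y "⟫" => @inner _ _ _ x y

lemma aux_quad (C N : ℝ) (hN : 0 ≤ N) (hC : 0 ≤ C)
    (h : ∀ t : ℝ, 0 ≤ t ^ 2 * C + 2 * t * N) : N = 0 := by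
  by_contra hne
  have hNpos : 0 < N := lt_of_le_of_ne hN (Ne.symm hne)
  have hC1 : (0:ℝ) < C + 1 := by linarith
  have ht := h (-(N / (C + 1)))
  have h1 : 0 < N / (C + 1) := div_pos hNpos hC1
  have h2 : (N / (C + 1)) * (C + 1) = N := div_mul_cancel₀ _ (ne_of_gt hC1)
  nlinarith [sq_nonneg (N / (C + 1)), mul_pos h1 hNpos]

lemma pos_inner_zero {𝕜 E : Type*} [RCLike 𝕜] [NormedAddCommGroup E] [InnerProductSpace 𝕜 E]
    (S : E →L[𝕜] E) (hsa : ∀ u v : E, (⟪S u, v⟫ : 𝕜) = ⟪u, S v⟫)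
    (hpos : ∀ v : E, 0 ≤ re (⟪S v, v⟫ : 𝕜)) (x : E) (hx : re (⟪S x, x⟫ : 𝕜) = 0) :
    S x = 0 := by
  have key : ∀ t : ℝ, 0 ≤ t ^ 2 * re (⟪S (S x), S x⟫ : 𝕜) + 2 * t * ‖S x‖ ^ 2 := by
    intro t
    have hp := hpos (x + (t : 𝕜) • S x)
    have hval : re (⟪S (x + (t:𝕜) • S x), x + (t:𝕜) • S x⟫ : 𝕜)
        = t ^ 2 * re (⟪S (S x), S x⟫ : 𝕜) + 2 * t * ‖S x‖ ^ 2 := by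
      rw [map_add, map_smul, inner_add_left, inner_add_right, inner_add_right,
        inner_smul_left, inner_smul_right, inner_smul_left, inner_smul_right,
        hsa (S x) x, conj_ofReal]
      simp only [map_add, re_ofReal_mul, ← mul_assoc, ← ofReal_mul]
      rw [hx, inner_self_eq_norm_sq (𝕜 := 𝕜) (S x)]
      ring
    rw [hval] at hp
    exact hp
  have hN0 : ‖S x‖ ^ 2 = 0 := aux_quad _ _ (by positivity) (hpos (S x)) key
  have : ‖S x‖ = 0 := by nlinarith [norm_nonneg (S x)]
  simpa using this

theorem stmt_12 {𝕜 : Type*} [RCLike 𝕜]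
    {H₁ H₂ : Type*} [NormedAddCommGroup H₁] [InnerProductSpace 𝕜 H₁] [CompleteSpace H₁]
    [NormedAddCommGroup H₂] [InnerProductSpace 𝕜 H₂] [CompleteSpace H₂]
    (T : H₁ →L[𝕜] H₂) (x y : H₁) (hx : ‖x‖ = 1) (hy : ‖y‖ = 1)
    (hxM : ‖T x‖ = ‖T‖) (hyM : ‖T y‖ = ‖T‖) :
    ∀ z ∈ Submodule.span 𝕜 ({x, y} : Set H₁), ‖z‖ = 1 → ‖T z‖ = ‖T‖ := by
  set A : H₁ →L[𝕜] H₁ := ContinuousLinearMap.adjoint T ∘L T with hA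
  set S : H₁ →L[𝕜] H₁ :=
    ((‖T‖ ^ 2 : ℝ) : 𝕜) • (ContinuousLinearMap.id 𝕜 H₁) - A with hS
  have hSapp : ∀ v, S v = ((‖T‖ ^ 2 : ℝ) : 𝕜) • v - A v := by
    intro v; simp [hS]
  have hAinner : ∀ u v : H₁, (⟪A u, v⟫ : 𝕜) = ⟪T u, T v⟫ := by
    intro u v
    exact ContinuousLinearMap.adjoint_inner_left T v (T u)
  have hAinner' : ∀ u v : H₁, (⟪u, A v⟫ : 𝕜) = ⟪T u, T v⟫ := by
    intro u v
    exact ContinuousLinearMap.adjoint_inner_right T u (T v)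
  have hsa : ∀ u v : H₁, (⟪S u, v⟫ : 𝕜) = ⟪u, S v⟫ := by
    intro u v
    rw [hSapp, hSapp, inner_sub_left, inner_sub_right, inner_smul_left, inner_smul_right,
      conj_ofReal, hAinner, hAinner']
  have hre : ∀ v : H₁, re (⟪S v, v⟫ : 𝕜) = ‖T‖ ^ 2 * ‖v‖ ^ 2 - ‖T v‖ ^ 2 := by
    intro v
    rw [hSapp, inner_sub_left, inner_smul_left, conj_ofReal, map_sub, re_ofReal_mul,
      inner_self_eq_norm_sq (𝕜 := 𝕜), hAinner, inner_self_eq_norm_sq (𝕜 := 𝕜)]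
  have hpos : ∀ v : H₁, 0 ≤ re (⟪S v, v⟫ : 𝕜) := by
    intro v
    rw [hre]
    have := T.le_opNorm v
    nlinarith [norm_nonneg (T v), norm_nonneg v, norm_nonneg T]
  have hker : ∀ w : H₁, ‖w‖ = 1 → ‖T w‖ = ‖T‖ → S w = 0 := by
    intro w hw hwM
    apply pos_inner_zero S hsa hpos
    rw [hre, hw, hwM]; ring
  have hSpan : ∀ z ∈ Submodule.span 𝕜 ({x, y} : Set H₁), S z = 0 := by
    intro z hz
    induction hz using Submodule.span_induction with
    | mem w hw =>
      rcases hw with h | h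
      · rw [h]; exact hker x hx hxM
      · rw [h]; exact hker y hy hyM
    | zero => simp
    | add a b _ _ ha hb => rw [map_add, ha, hb, add_zero]
    | smul c a _ ha => rw [map_smul, ha, smul_zero]
  intro z hz hz1
  have hSz : S z = 0 := hSpan z hz
  have heq : ‖T z‖ ^ 2 = ‖T‖ ^ 2 := by
    have h0 := hre z
    rw [hSz, hz1] at h0
    simp at h0
    nlinarith [h0]
  have h1 : (0:ℝ) ≤ ‖T z‖ := norm_nonneg _
  have h2 : (0:ℝ) ≤ ‖T‖ := norm_nonneg _
  calc ‖T z‖ = Real.sqrt (‖T z‖ ^ 2) := (Real.sqrt_sq h1).symm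
    _ = Real.sqrt (‖T‖ ^ 2) := by rw [heq]
    _ = ‖T‖ := Real.sqrt_sq h2
end

section
/- Let Y be a two-dimensional real Banach space that is strictly convex but whose norm does not satisfy the parallelogram identity (i.e., Y is not a Hilbert space). Then there exists a bounded linear operator T : Y → Y which is an extreme point of the closed unit ball of L(Y) but is not an isometry. -/
/-!
If every extreme contraction of a finite-dimensional strictly convex space `Y` were an isometry,
the isometries would act transitively on the unit sphere: for unit vectors `u, v`, the
contractions `T` with `T u = v` form a nonempty compact face of the unit ball of `L(Y)` (because
`v` is an extreme point of the unit ball of `Y`), and an extreme point of that face, which exists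
by Krein–Milman, is an extreme contraction. The isometry group is compact, so averaging a
Euclidean norm over its Haar measure gives an invariant quadratic form; by transitivity it is a
constant multiple of `‖·‖²`, hence the norm satisfies the parallelogram law.
-/

open Set Metric MeasureTheory

theorem isExtreme_inter_preimage_singleton {𝕜 E F : Type*} [Ring 𝕜] [PartialOrder 𝕜]
    [AddRightMono 𝕜] [AddCommGroup E] [AddCommGroup F] [Module 𝕜 E] [Module 𝕜 F]
    (f : E →ₗ[𝕜] F) {A : Set E} {B : Set F} (hAB : MapsTo f A B) {y : F}
    (hy : y ∈ B.extremePoints 𝕜) : IsExtreme 𝕜 A (A ∩ f ⁻¹' {y}) := by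
  refine ⟨inter_subset_left, fun x₁ hx₁ x₂ hx₂ x ⟨_, hxy⟩ hx ↦ ⟨hx₁, ?_⟩⟩
  have : f x ∈ openSegment 𝕜 (f x₁) (f x₂) :=
    image_openSegment 𝕜 f.toAffineMap x₁ x₂ ▸ mem_image_of_mem _ hx
  exact hy.2 (hAB hx₁) (hAB hx₂) ((show f x = y from hxy) ▸ this)

section Normed

variable {Y : Type*} [NormedAddCommGroup Y] [NormedSpace ℝ Y]

theorem exists_mem_extremePoints_closedBall_apply_eq [FiniteDimensional ℝ Y]
    [StrictConvexSpace ℝ Y] {u v : Y} (hu : ‖u‖ = 1) (hv : ‖v‖ = 1) :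
    ∃ T ∈ (closedBall (0 : Y →L[ℝ] Y) 1).extremePoints ℝ, T u = v := by
  let ev := ContinuousLinearMap.apply ℝ Y u
  let F := closedBall (0 : Y →L[ℝ] Y) 1 ∩ ev ⁻¹' {v}
  have hmaps : MapsTo ev (closedBall 0 1) (closedBall 0 1) := fun T hT ↦ by
    simpa [ev, hu] using T.le_of_opNorm_le (mem_closedBall_zero_iff.1 hT) u
  have hF : IsExtreme ℝ (closedBall 0 1) F :=
    isExtreme_inter_preimage_singleton ev.toLinearMap hmaps
      (StrictConvexSpace.sphere_subset_extremePoints_closedBall 0 one_ne_zero (by simpa using hv))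
  have hFc : IsCompact F :=
    (isCompact_closedBall _ _).inter_right (isClosed_singleton.preimage ev.continuous)
  obtain ⟨f, hf, hfu⟩ := exists_dual_vector ℝ u (by simp [hu])
  have hFne : F.Nonempty := by
    refine ⟨f.smulRight v, ?_, ?_⟩
    · simp [ContinuousLinearMap.norm_smulRight_apply, hf, hv]
    · simp [ev, hfu, hu]
  obtain ⟨T, hT⟩ := hFc.extremePoints_nonempty hFne
  exact ⟨T, hF.extremePoints_subset_extremePoints hT, (extremePoints_subset hT).2⟩

theorem norm_parallelogram_of_quadratic {q : Y → ℝ}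
    (hpar : ∀ x y, q (x + y) + q (x - y) = 2 * q x + 2 * q y)
    (hsmul : ∀ (t : ℝ) x, q (t • x) = t ^ 2 * q x) {c : ℝ} (hc : c ≠ 0)
    (hsphere : ∀ u, ‖u‖ = 1 → q u = c) (x y : Y) :
    ‖x + y‖ ^ 2 + ‖x - y‖ ^ 2 = 2 * ‖x‖ ^ 2 + 2 * ‖y‖ ^ 2 := by
  have hq : ∀ x : Y, q x = c * ‖x‖ ^ 2 := by
    intro x
    rcases eq_or_ne x 0 with rfl | hx
    · simpa using hsmul 0 0
    · have hx' : ‖x‖ ≠ 0 := norm_ne_zero_iff.2 hx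
      have hu : ‖‖x‖⁻¹ • x‖ = 1 := by rw [norm_smul, norm_inv, norm_norm, inv_mul_cancel₀ hx']
      conv_lhs => rw [← smul_inv_smul₀ hx' x]
      rw [hsmul, hsphere _ hu, mul_comm]
  have := hpar x y
  simp only [hq] at this
  exact mul_left_cancel₀ hc (by linear_combination this)

section Averaging

variable {G : Type*} [Group G] [FiniteDimensional ℝ Y] {ρ : G →* (Y →L[ℝ] Y)}

theorem continuous_sqNorm_toEuclidean_apply [TopologicalSpace G] (hρ : Continuous ρ) (x : Y) :
    Continuous fun g ↦ ‖toEuclidean (ρ g x)‖ ^ 2 := by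
  have : Continuous fun g ↦ ρ g x := (ContinuousLinearMap.apply ℝ Y x).continuous.comp hρ
  fun_prop

variable (ρ) [MeasurableSpace G] (μ : Measure G)

noncomputable def averagedSqNorm (x : Y) : ℝ :=
  ∫ g, ‖toEuclidean (ρ g x)‖ ^ 2 ∂μ

variable {ρ}

theorem integrable_sqNorm_toEuclidean_apply [TopologicalSpace G] [CompactSpace G]
    [OpensMeasurableSpace G] [IsFiniteMeasure μ] (hρ : Continuous ρ) (x : Y) :
    Integrable (fun g ↦ ‖toEuclidean (ρ g x)‖ ^ 2) μ :=
  (continuous_sqNorm_toEuclidean_apply hρ x).integrable_of_hasCompactSupport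
    (.of_compactSpace _)

theorem averagedSqNorm_add_add_sub [TopologicalSpace G] [CompactSpace G]
    [OpensMeasurableSpace G] [IsFiniteMeasure μ] (hρ : Continuous ρ) (x y : Y) :
    averagedSqNorm ρ μ (x + y) + averagedSqNorm ρ μ (x - y) =
      2 * averagedSqNorm ρ μ x + 2 * averagedSqNorm ρ μ y := by
  have hint := integrable_sqNorm_toEuclidean_apply μ hρ
  simp only [averagedSqNorm, ← integral_const_mul, ← integral_add (hint _) (hint _),
    ← integral_add ((hint x).const_mul 2) ((hint y).const_mul 2)]
  congr 1 with g
  simp only [map_add, map_sub]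
  linear_combination parallelogram_law_with_norm ℝ (toEuclidean (ρ g x)) (toEuclidean (ρ g y))

theorem averagedSqNorm_smul (t : ℝ) (x : Y) :
    averagedSqNorm ρ μ (t • x) = t ^ 2 * averagedSqNorm ρ μ x := by
  simp only [averagedSqNorm, ← integral_const_mul, map_smul, norm_smul, mul_pow,
    Real.norm_eq_abs, sq_abs]

theorem averagedSqNorm_map [MeasurableMul G] [μ.IsMulRightInvariant] (h : G) (x : Y) :
    averagedSqNorm ρ μ (ρ h x) = averagedSqNorm ρ μ x := by
  simpa only [averagedSqNorm, map_mul, mul_apply_eq_comp] using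
    integral_mul_right_eq_self (fun g ↦ ‖toEuclidean (ρ g x)‖ ^ 2) h

theorem averagedSqNorm_pos [TopologicalSpace G] [CompactSpace G] [OpensMeasurableSpace G]
    [μ.IsOpenPosMeasure] [IsFiniteMeasure μ] (hρ : Continuous ρ)
    {x : Y} (hx : x ≠ 0) : 0 < averagedSqNorm ρ μ x :=
  (continuous_sqNorm_toEuclidean_apply hρ x).integral_pos_of_hasCompactSupport_nonneg_nonzero
    (.of_compactSpace _) (fun _ ↦ sq_nonneg _) (x := 1) (by simpa using hx)

end Averaging

variable (Y) in
def isometryUnits : Subgroup (Y →L[ℝ] Y)ˣ where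
  carrier := {g | ∀ y, ‖(g : Y →L[ℝ] Y) y‖ = ‖y‖}
  mul_mem' ha hb y := by rw [Units.val_mul, mul_apply_eq_comp, ha, hb]
  one_mem' _ := rfl
  inv_mem' {g} hg y := by rw [← hg, ← mul_apply_eq_comp, Units.mul_inv, one_apply_eq_self]

theorem isCompact_isometries [FiniteDimensional ℝ Y] :
    IsCompact {T : Y →L[ℝ] Y | ∀ y, ‖T y‖ = ‖y‖} := by
  have hclosed : IsClosed {T : Y →L[ℝ] Y | ∀ y, ‖T y‖ = ‖y‖} := by
    rw [ofPred_forall]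
    exact isClosed_iInter fun y ↦
      isClosed_eq (ContinuousLinearMap.apply ℝ Y y).continuous.norm continuous_const
  refine (isCompact_closedBall 0 1).of_isClosed_subset hclosed fun T hT ↦ ?_
  exact mem_closedBall_zero_iff.2 (T.opNorm_le_bound zero_le_one fun y ↦ by rw [hT, one_mul])

theorem image_val_isometryUnits [FiniteDimensional ℝ Y] :
    Units.val '' (isometryUnits Y : Set (Y →L[ℝ] Y)ˣ) = {T | ∀ y, ‖T y‖ = ‖y‖} := by
  refine Subset.antisymm (image_subset_iff.2 fun _ hg ↦ hg) fun T hT ↦ ?_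
  have hinj : Function.Injective T := ((AddMonoidHomClass.isometry_iff_norm T).2 hT).injective
  obtain ⟨g, rfl⟩ :=
    T.isUnit_iff_bijective.2 ⟨hinj, LinearMap.injective_iff_surjective (f := T.toLinearMap).1 hinj⟩
  exact ⟨g, hT, rfl⟩

theorem isCompact_isometryUnits [FiniteDimensional ℝ Y] :
    IsCompact (isometryUnits Y : Set (Y →L[ℝ] Y)ˣ) := by
  rw [Units.isOpenEmbedding_val.isEmbedding.isCompact_iff, image_val_isometryUnits]
  exact isCompact_isometries

theorem norm_parallelogram_of_forall_exists_isometry_apply_eq [FiniteDimensional ℝ Y]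
    [Nontrivial Y]
    (htrans : ∀ u v : Y, ‖u‖ = 1 → ‖v‖ = 1 → ∃ T : Y →L[ℝ] Y, (∀ y, ‖T y‖ = ‖y‖) ∧ T u = v)
    (x y : Y) : ‖x + y‖ ^ 2 + ‖x - y‖ ^ 2 = 2 * ‖x‖ ^ 2 + 2 * ‖y‖ ^ 2 := by
  let G := isometryUnits Y
  have : CompactSpace G := isCompact_iff_compactSpace.1 isCompact_isometryUnits
  let _ : MeasurableSpace G := borel G
  have : BorelSpace G := ⟨rfl⟩
  let ρ : G →* (Y →L[ℝ] Y) := (Units.coeHom _).comp G.subtype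
  have hρ : Continuous ρ := Units.continuous_val.comp continuous_subtype_val
  -- right invariant, as the inverse of a left Haar measure
  let μ : Measure G := Measure.haar.inv
  obtain ⟨z, hz⟩ := exists_norm_eq Y zero_le_one
  have hz0 : z ≠ 0 := ne_zero_of_norm_ne_zero (hz ▸ one_ne_zero)
  refine norm_parallelogram_of_quadratic (averagedSqNorm_add_add_sub μ hρ) (averagedSqNorm_smul μ)
    (averagedSqNorm_pos μ hρ hz0).ne' (fun u hu ↦ ?_) x y
  obtain ⟨T, hT, rfl⟩ := htrans z u hz hu
  obtain ⟨g, hg, rfl⟩ : T ∈ Units.val '' (G : Set (Y →L[ℝ] Y)ˣ) := by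
    rwa [image_val_isometryUnits]
  exact averagedSqNorm_map μ ⟨g, hg⟩ z

end Normed

theorem stmt_13_general {Y : Type*} [NormedAddCommGroup Y] [NormedSpace ℝ Y]
    (hdim : Module.finrank ℝ Y = 2) [StrictConvexSpace ℝ Y]
    (hnH : ¬ ∀ x y : Y, ‖x + y‖ ^ 2 + ‖x - y‖ ^ 2 = 2 * ‖x‖ ^ 2 + 2 * ‖y‖ ^ 2) :
    ∃ T : Y →L[ℝ] Y,
      T ∈ Set.extremePoints ℝ (Metric.closedBall (0 : Y →L[ℝ] Y) 1) ∧
      ¬ (∀ y : Y, ‖T y‖ = ‖y‖) := by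
  have : FiniteDimensional ℝ Y := Module.finite_of_finrank_eq_succ hdim
  have : Nontrivial Y := Module.nontrivial_of_finrank_eq_succ hdim
  by_contra! hext
  refine hnH (norm_parallelogram_of_forall_exists_isometry_apply_eq fun u v hu hv ↦ ?_)
  obtain ⟨T, hT, hTu⟩ := exists_mem_extremePoints_closedBall_apply_eq hu hv
  exact ⟨T, hext T hT, hTu⟩

theorem stmt_13 {Y : Type*} [NormedAddCommGroup Y] [NormedSpace ℝ Y] [CompleteSpace Y]
    (hdim : Module.finrank ℝ Y = 2) [StrictConvexSpace ℝ Y]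
    (hnH : ¬ ∀ x y : Y, ‖x + y‖ ^ 2 + ‖x - y‖ ^ 2 = 2 * ‖x‖ ^ 2 + 2 * ‖y‖ ^ 2) :
    ∃ T : Y →L[ℝ] Y,
      T ∈ Set.extremePoints ℝ (Metric.closedBall (0 : Y →L[ℝ] Y) 1) ∧
      ¬ (∀ y : Y, ‖T y‖ = ‖y‖) :=
  stmt_13_general hdim hnH
end
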